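/- Let (A_n) be a sequence of nonempty compact subsets of ℝ² converging in the Hausdorff metric to a nonempty compact subset A ⊆ ℝ² (i.e., the Hausdorff distance between A_n and A tends to 0). Then μ(A_n) converges to μ(A). -/

import Mathlib

noncomputable section

/-- The plane with the Euclidean distance. -/
abbrev Plane : Type := EuclideanSpace ℝ (Fin 2)

/-- `m q i p = 1 / (1 + dist p (q i))`. -/
def m (q : ℕ → Plane) (i : ℕ) (p : Plane) : ℝ := 1 / (1 + dist p (q i))

/-- `μᵢ(A) = sup_{x,y ∈ A} |m_i x - m_i y|`. -/
def muI (q : ℕ → Plane) (i : ℕ) (A : Set Plane) : ℝ :=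
  sSup ((fun xy : Plane × Plane => |m q i xy.1 - m q i xy.2|) '' (A ×ˢ A))

/-- The Whitney function `μ(A) = Σ_i μᵢ(A) / 2^i`. -/
def mu (q : ℕ → Plane) (A : Set Plane) : ℝ := ∑' i : ℕ, muI q i A / 2 ^ i

lemma m_abs_sub_le_one (q : ℕ → Plane) (i : ℕ) (x y : Plane) :
    |m q i x - m q i y| ≤ 1 := by
  have hx0 : (0:ℝ) < 1 + dist x (q i) := by positivity
  have hy0 : (0:ℝ) < 1 + dist y (q i) := by positivity
  have hx : m q i x ≤ 1 := by
    rw [m, div_le_one hx0]; linarith [dist_nonneg (x := x) (y := q i)]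
  have hy : m q i y ≤ 1 := by
    rw [m, div_le_one hy0]; linarith [dist_nonneg (x := y) (y := q i)]
  have hx' : 0 ≤ m q i x := by rw [m]; positivity
  have hy' : 0 ≤ m q i y := by rw [m]; positivity
  rw [abs_sub_le_iff]; constructor <;> linarith

lemma m_lip (q : ℕ → Plane) (i : ℕ) (x y : Plane) :
    |m q i x - m q i y| ≤ dist x y := by
  set a := dist x (q i) with ha
  set b := dist y (q i) with hb
  have ha0 : (0:ℝ) ≤ a := dist_nonneg
  have hb0 : (0:ℝ) ≤ b := dist_nonneg
  have key : m q i x - m q i y = (b - a) / ((1 + a) * (1 + b)) := by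
    rw [m, m, ← ha, ← hb]
    rw [div_sub_div _ _ (by positivity) (by positivity)]
    ring_nf
  rw [key, abs_div]
  have hden : (1:ℝ) ≤ |(1 + a) * (1 + b)| := by
    rw [abs_of_pos (by positivity)]; nlinarith
  calc |b - a| / |(1 + a) * (1 + b)| ≤ |b - a| / 1 := by
        apply div_le_div_of_nonneg_left (abs_nonneg _) one_pos hden
    _ = |b - a| := by ring
    _ = |a - b| := abs_sub_comm _ _
    _ ≤ dist x y := abs_dist_sub_le x y (q i)

lemma muI_bddAbove (q : ℕ → Plane) (i : ℕ) (A : Set Plane) :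
    BddAbove ((fun xy : Plane × Plane => |m q i xy.1 - m q i xy.2|) '' (A ×ˢ A)) := by
  refine ⟨1, ?_⟩
  rintro z ⟨⟨x, y⟩, _, rfl⟩
  exact m_abs_sub_le_one q i x y

lemma muI_nonneg (q : ℕ → Plane) (i : ℕ) {A : Set Plane} (hA : A.Nonempty) :
    0 ≤ muI q i A := by
  obtain ⟨x, hx⟩ := hA
  have : |m q i x - m q i x| ∈
      (fun xy : Plane × Plane => |m q i xy.1 - m q i xy.2|) '' (A ×ˢ A) :=
    ⟨(x, x), ⟨hx, hx⟩, rfl⟩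
  have := le_csSup (muI_bddAbove q i A) this
  simpa [muI] using this

lemma muI_le_one (q : ℕ → Plane) (i : ℕ) {A : Set Plane} (hA : A.Nonempty) :
    muI q i A ≤ 1 := by
  apply csSup_le (Set.Nonempty.image _ (hA.prod hA))
  rintro z ⟨⟨x, y⟩, _, rfl⟩
  exact m_abs_sub_le_one q i x y

lemma muI_le_of_hausdorff (q : ℕ → Plane) (i : ℕ) {A B : Set Plane}
    (hAc : IsCompact A) (hAne : A.Nonempty) (hBc : IsCompact B) (hBne : B.Nonempty) :
    muI q i A ≤ muI q i B + 2 * Metric.hausdorffDist A B := by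
  have hedist : EMetric.hausdorffEdist A B ≠ ⊤ :=
    Metric.hausdorffEdist_ne_top_of_nonempty_of_bounded hAne hBne hAc.isBounded hBc.isBounded
  apply csSup_le (Set.Nonempty.image _ (hAne.prod hAne))
  rintro z ⟨⟨x, y⟩, ⟨hx, hy⟩, rfl⟩
  obtain ⟨x', hx'B, hx'⟩ := hBc.exists_infDist_eq_dist hBne x
  obtain ⟨y', hy'B, hy'⟩ := hBc.exists_infDist_eq_dist hBne y
  have hdx : dist x x' ≤ Metric.hausdorffDist A B := by
    rw [← hx']; exact Metric.infDist_le_hausdorffDist_of_mem hx hedist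
  have hdy : dist y y' ≤ Metric.hausdorffDist A B := by
    rw [← hy']; exact Metric.infDist_le_hausdorffDist_of_mem hy hedist
  have hB : |m q i x' - m q i y'| ≤ muI q i B :=
    le_csSup (muI_bddAbove q i B) ⟨(x', y'), ⟨hx'B, hy'B⟩, rfl⟩
  have h1 : |m q i x - m q i x'| ≤ dist x x' := m_lip q i x x'
  have h2 : |m q i y - m q i y'| ≤ dist y y' := m_lip q i y y'
  have : |m q i x - m q i y| ≤
      |m q i x - m q i x'| + |m q i x' - m q i y'| + |m q i y' - m q i y| := by
    have := abs_sub_le (m q i x) (m q i x') (m q i y)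
    have := abs_sub_le (m q i x') (m q i y') (m q i y)
    linarith
  rw [abs_sub_comm (m q i y')] at this
  linarith

lemma abs_muI_sub_le (q : ℕ → Plane) (i : ℕ) {A B : Set Plane}
    (hAc : IsCompact A) (hAne : A.Nonempty) (hBc : IsCompact B) (hBne : B.Nonempty) :
    |muI q i A - muI q i B| ≤ 2 * Metric.hausdorffDist A B := by
  rw [abs_sub_le_iff]
  constructor
  · linarith [muI_le_of_hausdorff q i hAc hAne hBc hBne]
  · have := muI_le_of_hausdorff q i hBc hBne hAc hAne
    rw [Metric.hausdorffDist_comm] at this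
    linarith

lemma mu_summable (q : ℕ → Plane) {A : Set Plane} (hA : A.Nonempty) :
    Summable (fun i => muI q i A / 2 ^ i) := by
  refine Summable.of_nonneg_of_le
    (fun i => div_nonneg (muI_nonneg q i hA) (by positivity)) (fun i => ?_) summable_geometric_two
  rw [div_pow, one_pow]
  exact div_le_div_of_nonneg_right (muI_le_one q i hA) (by positivity)

set_option maxHeartbeats 1000000 in
lemma abs_mu_sub_le (q : ℕ → Plane) {A B : Set Plane}
    (hAc : IsCompact A) (hAne : A.Nonempty) (hBc : IsCompact B) (hBne : B.Nonempty) :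
    |mu q A - mu q B| ≤ 4 * Metric.hausdorffDist A B := by
  have hSA := mu_summable q hAne
  have hSB := mu_summable q hBne
  have hdiff : mu q A - mu q B = ∑' i, (muI q i A - muI q i B) / 2 ^ i := by
    rw [mu, mu, ← Summable.tsum_sub hSA hSB]
    congr 1; ext i; ring
  rw [hdiff]
  have hsum : Summable (fun i => (muI q i A - muI q i B) / 2 ^ i) := by
    have := hSA.sub hSB
    convert this using 2 with i
    case e'_5 => ring
    case e'_3 => rfl
  have hle : ∀ i, |(muI q i A - muI q i B) / 2 ^ i| ≤
      2 * Metric.hausdorffDist A B * (1/2:ℝ)^i := by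
    intro i
    rw [abs_div, abs_of_pos (show (0:ℝ) < 2 ^ i by positivity)]
    calc |muI q i A - muI q i B| / 2 ^ i
        ≤ (2 * Metric.hausdorffDist A B) / 2 ^ i :=
          div_le_div_of_nonneg_right (abs_muI_sub_le q i hAc hAne hBc hBne) (by positivity)
      _ = 2 * Metric.hausdorffDist A B * (1/2:ℝ)^i := by
          rw [div_pow, one_pow]; ring
  have habs : Summable (fun i => |(muI q i A - muI q i B) / 2 ^ i|) :=
    Summable.of_nonneg_of_le (fun i => abs_nonneg _) hle (summable_geometric_two.mul_left _)
  calc |∑' i, (muI q i A - muI q i B) / 2 ^ i|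
      ≤ ∑' i, |(muI q i A - muI q i B) / 2 ^ i| := by
        have := norm_tsum_le_tsum_norm (f := fun i => (muI q i A - muI q i B) / 2 ^ i)
          (by simpa only [Real.norm_eq_abs] using habs)
        simpa only [Real.norm_eq_abs] using this
    _ ≤ ∑' i, 2 * Metric.hausdorffDist A B * (1/2:ℝ)^i :=
        Summable.tsum_le_tsum hle habs (summable_geometric_two.mul_left _)
    _ = 2 * Metric.hausdorffDist A B * 2 := by
        rw [tsum_mul_left, tsum_geometric_two]
    _ = 4 * Metric.hausdorffDist A B := by ring

/-- Whitney's theorem, item (v): continuity of `μ` with respect to the Hausdorff metric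
on nonempty compact subsets of the plane. -/
theorem whitney_mu_continuous (q : ℕ → Plane) (hq : DenseRange q)
    (A : ℕ → Set Plane) (hAc : ∀ n, IsCompact (A n)) (hAne : ∀ n, (A n).Nonempty)
    (B : Set Plane) (hBc : IsCompact B) (hBne : B.Nonempty)
    (hconv : Filter.Tendsto (fun n => Metric.hausdorffDist (A n) B) Filter.atTop (nhds 0)) :
    Filter.Tendsto (fun n => mu q (A n)) Filter.atTop (nhds (mu q B)) := by
  rw [tendsto_iff_dist_tendsto_zero]
  have h4 : Filter.Tendsto (fun n => 4 * Metric.hausdorffDist (A n) B) Filter.atTop (nhds 0) := by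
    simpa using hconv.const_mul 4
  apply squeeze_zero (fun n => dist_nonneg) (fun n => ?_) h4
  rw [Real.dist_eq]
  exact abs_mu_sub_le q (hAc n) (hAne n) hBc hBne
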